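/- arXiv:1007.5051 — 4 statements merged into one kernel-verified Lean document; each statement's English description precedes it below -/
import Mathlib

section
/- Let 0 < β ≤ 1, λ > 0, and let s > 0 satisfy λ < s^β. Then ∫₀^∞ s e^{−st} (1 − E_β(−λ t^β)) dt = λ/(λ + s^β), where E_β(−λ t^β) = ∑_{k=0}^∞ (−λ t^β)^k / Γ(1 + βk). -/
/-!
Expanding `E_β(c t^β) = ∑ c^k t^{βk} / Γ(1 + βk)`, the `k`-th term contributes the Gamma integral
`s ∫₀^∞ e^{-st} t^{βk} dt / Γ(1 + βk) = s^{-βk}`, so the Laplace transform of `E_β(c t^β)` is the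
geometric series `∑ (c / s^β)^k = (1 - c / s^β)⁻¹`. Integrating termwise is legitimate because the
same computation with `|c|` gives a convergent series of norms when `|c| < s^β`. Taking `c = -λ`
and subtracting from `∫₀^∞ s e^{-st} dt = 1` gives `1 - s^β / (λ + s^β) = λ / (λ + s^β)`.
-/

open Set Filter Topology MeasureTheory Real

/-- The Mittag-Leffler function `E_β(z) = ∑_{k=0}^∞ z^k / Γ(1 + βk)`. -/
noncomputable def mittagLeffler (β z : ℝ) : ℝ :=
  ∑' k : ℕ, z ^ k / Real.Gamma (1 + β * k)

lemma mul_exp_neg_mul_mul_rpow_pow_eq {t : ℝ} (ht : 0 ≤ t) (s c β : ℝ) (k : ℕ) :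
    s * exp (-(s * t)) * ((c * t ^ β) ^ k / Gamma (1 + β * k)) =
      s * c ^ k / Gamma (1 + β * k) * (t ^ (β * k + 1 - 1) * exp (-(s * t))) := by
  rw [mul_pow, ← rpow_natCast (t ^ β), ← rpow_mul ht, add_sub_cancel_right]
  ring

lemma integrableOn_rpow_mul_exp_neg_mul {a s : ℝ} (ha : 0 < a) (hs : 0 < s) :
    IntegrableOn (fun t : ℝ ↦ t ^ (a - 1) * exp (-(s * t))) (Ioi 0) :=
  .of_integral_ne_zero <| by rw [integral_rpow_mul_exp_neg_mul_Ioi ha hs]; positivity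

lemma integrableOn_mul_exp_neg_mul_mul_rpow_pow {β s : ℝ} (hβ : 0 ≤ β) (hs : 0 < s) (c : ℝ)
    (k : ℕ) :
    IntegrableOn (fun t ↦ s * exp (-(s * t)) * ((c * t ^ β) ^ k / Gamma (1 + β * k))) (Ioi 0) :=
  IntegrableOn.congr_fun
    ((integrableOn_rpow_mul_exp_neg_mul (a := β * k + 1) (by positivity) hs).const_mul _)
    (fun _ ht ↦ (mul_exp_neg_mul_mul_rpow_pow_eq (le_of_lt ht) s c β k).symm) measurableSet_Ioi

lemma integral_mul_exp_neg_mul_mul_rpow_pow {β s : ℝ} (hβ : 0 ≤ β) (hs : 0 < s) (c : ℝ) (k : ℕ) :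
    ∫ t in Ioi 0, s * exp (-(s * t)) * ((c * t ^ β) ^ k / Gamma (1 + β * k)) =
      (c / s ^ β) ^ k := by
  rw [setIntegral_congr_fun measurableSet_Ioi
      (fun _ ht ↦ mul_exp_neg_mul_mul_rpow_pow_eq (le_of_lt ht) s c β k),
    integral_const_mul, integral_rpow_mul_exp_neg_mul_Ioi (by positivity) hs,
    add_comm (β * k) 1, rpow_add (by positivity), rpow_one, div_pow, ← rpow_natCast (s ^ β),
    ← rpow_mul hs.le, one_div, inv_rpow hs.le]
  have : Gamma (1 + β * k) ≠ 0 := (Gamma_pos_of_pos (by positivity)).ne'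
  field_simp

lemma norm_mul_exp_neg_mul_mul_rpow_pow {β t : ℝ} (ht : 0 ≤ t) (hβ : 0 ≤ β) (s c : ℝ) (k : ℕ) :
    ‖s * exp (-(s * t)) * ((c * t ^ β) ^ k / Gamma (1 + β * k))‖ =
      |s| * exp (-(s * t)) * ((|c| * t ^ β) ^ k / Gamma (1 + β * k)) := by
  rw [norm_mul, norm_mul, norm_div, norm_pow, norm_mul, norm_of_nonneg (rpow_nonneg ht β),
    norm_of_nonneg (exp_pos _).le, norm_of_nonneg (Gamma_pos_of_pos (by positivity)).le,
    norm_eq_abs, norm_eq_abs]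

theorem integral_mul_exp_neg_mul_mittagLeffler {β s : ℝ} (hβ : 0 ≤ β) (hs : 0 < s) {c : ℝ}
    (hc : |c| < s ^ β) :
    ∫ t in Ioi 0, s * exp (-(s * t)) * mittagLeffler β (c * t ^ β) = (1 - c / s ^ β)⁻¹ := by
  have hsβ : 0 < s ^ β := rpow_pos_of_pos hs β
  have hq : ‖c / s ^ β‖ < 1 := by rwa [norm_div, norm_of_nonneg hsβ.le, div_lt_one hsβ]
  have hsum_norm : Summable fun k : ℕ ↦
      ∫ t in Ioi 0, ‖s * exp (-(s * t)) * ((c * t ^ β) ^ k / Gamma (1 + β * k))‖ := by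
    refine (summable_geometric_of_norm_lt_one hq).norm.congr fun k ↦ ?_
    rw [setIntegral_congr_fun measurableSet_Ioi
        (fun _ ht ↦ norm_mul_exp_neg_mul_mul_rpow_pow (le_of_lt ht) hβ s c k), abs_of_pos hs,
      integral_mul_exp_neg_mul_mul_rpow_pow hβ hs, norm_pow, norm_div, norm_of_nonneg hsβ.le,
      norm_eq_abs]
  -- No convergence of the series itself is needed: `tsum_mul_left` holds unconditionally in a
  -- field, and the summable norms of the integrals make the series converge almost everywhere.
  simp_rw [mittagLeffler, ← tsum_mul_left]
  rw [← integral_tsum_of_summable_integral_norm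
      (integrableOn_mul_exp_neg_mul_mul_rpow_pow hβ hs c) hsum_norm]
  simp_rw [integral_mul_exp_neg_mul_mul_rpow_pow hβ hs]
  exact tsum_geometric_of_norm_lt_one hq

theorem stmt3_general (β lam s : ℝ) (hβ0 : 0 < β) (hlam : 0 < lam)
    (hs : 0 < s) (hls : lam < s ^ β) :
    ∫ t in Set.Ioi (0:ℝ),
        s * Real.exp (-(s * t)) * (1 - mittagLeffler β (-(lam * t ^ β))) =
      lam / (lam + s ^ β) := by
  have hsβ : 0 < s ^ β := rpow_pos_of_pos hs β
  have hML : ∫ t in Ioi 0, s * exp (-(s * t)) * mittagLeffler β (-(lam * t ^ β)) =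
      s ^ β / (lam + s ^ β) := by
    simpa only [neg_mul, neg_div, sub_neg_eq_add, one_add_div hsβ.ne', inv_div, add_comm (s ^ β)]
      using integral_mul_exp_neg_mul_mittagLeffler hβ0.le hs (c := -lam)
        (by rwa [abs_neg, abs_of_pos hlam])
  have hexp_int : IntegrableOn (fun t ↦ s * exp (-(s * t))) (Ioi 0) := by
    simpa using integrableOn_mul_exp_neg_mul_mul_rpow_pow hβ0.le hs 0 0
  have hexp : ∫ t in Ioi 0, s * exp (-(s * t)) = 1 := by
    simpa using integral_mul_exp_neg_mul_mul_rpow_pow hβ0.le hs 0 0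
  simp_rw [mul_sub, mul_one]
  rw [integral_sub hexp_int (.of_integral_ne_zero (by rw [hML]; positivity)), hML, hexp,
    one_sub_div (by positivity), add_sub_cancel_right]

/-- For `0 < β ≤ 1`, `λ > 0` and `s > 0` with `λ < s^β`,
`∫₀^∞ s e^{−st} (1 − E_β(−λ t^β)) dt = λ/(λ + s^β)`. -/
theorem stmt3 (β lam s : ℝ) (hβ0 : 0 < β) (hβ1 : β ≤ 1) (hlam : 0 < lam)
    (hs : 0 < s) (hls : lam < s ^ β) :
    ∫ t in Set.Ioi (0:ℝ),
        s * Real.exp (-(s * t)) * (1 - mittagLeffler β (-(lam * t ^ β))) =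
      lam / (lam + s ^ β) :=
  stmt3_general β lam s hβ0 hlam hs hls
end

section
/- Let λ > 0. Let (Ω, P) be a probability space carrying: (a) a jointly measurable process D : [0,∞) × Ω → [0,∞) such that almost surely the path t ↦ D(t) is strictly increasing, right-continuous, starts at D(0) = 0 and tends to ∞; such that for all 0 ≤ t₁ < t₂ < ⋯ < tₙ the increments D(t₁), D(t₂) − D(t₁), …, D(tₙ) − D(tₙ₋₁) are independent; and such that for all t, h ≥ 0 the increment D(t + h) − D(t) has the same distribution as D(h); and (b) a sequence (Wₙ)ₙ≥1 of i.i.d. random variables with P(Wₙ > t) = e^{−λt} for t ≥ 0, independent of the whole process D. Define the inverse process E(t, ω) = inf{r > 0 : D(r, ω) > t}. Set Vₙ = W₁ + ⋯ + Wₙ, let τₙ(ω) be the left limit of the path t ↦ D(t, ω) at Vₙ(ω), and set X₁ = τ₁, Xₙ = τₙ − τₙ₋₁ for n ≥ 2. Then the random variables (Xₙ)ₙ≥1 are i.i.d. with P(Xₙ > t) = E[e^{−λ E(t)}] for every t ≥ 0. -/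
/-!
Conditionally on the exponential times, `Xₖ` is the increment of `D` between its left limits
at `Vₖ₋₁` and `Vₖ`. A right-continuous process with stationary increments almost surely has no
jump at a fixed time, so for fixed positive `w` these left limits are the values of `D` at the
partial sums of `w`. The `Xₖ` are then increments of `D` over disjoint intervals of lengths
`wₖ`, hence independent with `P(Xₖ > t) = P(D(wₖ) > t)`; integrating over the independent times
gives independence and `P(Xₖ > t) = E[P(D(Wₖ) > t | D)]`. Finally `D(u) > t` iff `E(t) < u`
except at the single point `u = E(t)`, which the exponential time `Wₖ` avoids almost surely, so
`P(D(Wₖ) > t | D) = e^{-λ E(t)}`.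
-/

open Set Filter Topology MeasureTheory Real ProbabilityTheory
open scoped ENNReal

def increments (x : ℕ → ℝ) (k : ℕ) : ℝ := x k - if k = 0 then 0 else x (k - 1)

def partialSum (w : ℕ → ℝ) (k : ℕ) : ℝ := ∑ i ∈ Finset.range (k + 1), w i

lemma increments_partialSum (w : ℕ → ℝ) (k : ℕ) : increments (partialSum w) k = w k := by
  cases k <;> simp [increments, partialSum, Finset.sum_range_succ]

lemma partialSum_pos {w : ℕ → ℝ} (hw : ∀ i, 0 < w i) (k : ℕ) : 0 < partialSum w k :=
  Finset.sum_pos (fun i _ => hw i) Finset.nonempty_range_add_one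

lemma partialSum_strictMono {w : ℕ → ℝ} (hw : ∀ i, 0 < w i) : StrictMono (partialSum w) :=
  strictMono_nat_of_lt_succ fun k => by
    simpa [partialSum, Finset.sum_range_succ _ (k + 1)] using hw (k + 1)

lemma measurable_partialSum (k : ℕ) : Measurable fun w : ℕ → ℝ => partialSum w k :=
  Finset.measurable_sum _ fun i _ => measurable_pi_apply i

/-- The left limit `f (v-)` of a function monotone on `[0, ∞)`, computed along rationals so that
it is jointly measurable in `(f, v)` for the product σ-algebra on `ℝ → ℝ`. -/
noncomputable def ratLeftLim (f : ℝ → ℝ) (v : ℝ) : ℝ :=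
  ⨆ q : ℚ, if (q : ℝ) ∈ Ico 0 v then f q else f 0

lemma measurable_ratLeftLim {α : Type*} [MeasurableSpace α] {f : α → ℝ → ℝ}
    {v : α → ℝ} (hf : Measurable f) (hv : Measurable v) :
    Measurable fun a => ratLeftLim (f a) (v a) :=
  Measurable.iSup fun _ => Measurable.ite
    ((MeasurableSet.const _).inter (measurableSet_lt measurable_const hv))
    ((measurable_pi_apply _).comp hf) ((measurable_pi_apply _).comp hf)

lemma ratLeftLim_eq_of_tendsto {f : ℝ → ℝ} (hf : MonotoneOn f (Ici 0)) {v L : ℝ}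
    (hv : 0 < v) (hL : Tendsto f (𝓝[<] v) (𝓝 L)) : ratLeftLim f v = L := by
  have hbound : ∀ x ∈ Ico 0 v, f x ≤ L := fun x hx => ge_of_tendsto hL <| by
    filter_upwards [Ioo_mem_nhdsLT hx.2] with u hu
    exact hf hx.1 (hx.1.trans hu.1.le) hu.1.le
  have hterm : ∀ q : ℚ, (if (q : ℝ) ∈ Ico 0 v then f q else f 0) ≤ L := fun q => by
    split_ifs with hq
    exacts [hbound _ hq, hbound 0 ⟨le_rfl, hv⟩]
  refine le_antisymm (ciSup_le hterm) (le_of_tendsto hL ?_)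
  filter_upwards [Ioo_mem_nhdsLT hv] with u hu
  obtain ⟨q, huq, hqv⟩ := exists_rat_btwn hu.2
  have hq : (q : ℝ) ∈ Ico 0 v := ⟨hu.1.le.trans huq.le, hqv⟩
  calc f u ≤ f q := hf hu.1.le hq.1 huq.le
    _ = if (q : ℝ) ∈ Ico 0 v then f q else f 0 := (if_pos hq).symm
    _ ≤ ratLeftLim f v := le_ciSup ⟨L, forall_mem_range.2 hterm⟩ q

lemma MonotoneOn.continuousWithinAt_Iio_of_tendsto_comp {f : ℝ → ℝ}
    (hf : MonotoneOn f (Ici 0)) {v : ℝ} (hv : 0 < v) {x : ℕ → ℝ}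
    (hx : ∀ k, x k ∈ Ico 0 v)
    (hfx : Tendsto (fun k => f (x k)) atTop (𝓝 (f v))) : ContinuousWithinAt f (Iio v) v := by
  refine tendsto_order.2 ⟨fun b hb => ?_, fun b hb => ?_⟩
  · obtain ⟨k, hk⟩ := (hfx.eventually (lt_mem_nhds hb)).exists
    filter_upwards [Ioo_mem_nhdsLT (hx k).2] with u hu
    exact hk.trans_le (hf (hx k).1 ((hx k).1.trans hu.1.le) hu.1.le)
  · filter_upwards [Ico_mem_nhdsLT hv] with u hu
    exact (hf hu.1 hv.le hu.2.le).trans_lt hb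

lemma lt_iff_sInf_lt_of_monotoneOn {f : ℝ → ℝ} (hf : MonotoneOn f (Ici 0)) {t : ℝ}
    (hS : {r | 0 < r ∧ t < f r}.Nonempty) {u : ℝ} (hu : 0 < u)
    (hne : u ≠ sInf {r | 0 < r ∧ t < f r}) : t < f u ↔ sInf {r | 0 < r ∧ t < f r} < u := by
  have hbdd : BddBelow {r | 0 < r ∧ t < f r} := ⟨0, fun r hr => hr.1.le⟩
  refine ⟨fun h => (csInf_le hbdd ⟨hu, h⟩).lt_of_ne hne.symm, fun h => ?_⟩
  obtain ⟨r, ⟨hr0, hrt⟩, hru⟩ := exists_lt_of_csInf_lt hS h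
  exact hrt.trans_le (hf hr0.le hu.le hru.le)

section

variable {Ω : Type*} [MeasurableSpace Ω] {P : Measure Ω} {D : ℝ → Ω → ℝ}

def HasIndepIncrementsFromZero (D : ℝ → Ω → ℝ) (P : Measure Ω) : Prop :=
  ∀ (n : ℕ) (t : ℕ → ℝ), 0 ≤ t 0 → StrictMono t →
    iIndepFun (fun (i : Fin (n + 1)) ω => increments (fun j => D (t j) ω) i) P

def HasStationaryIncrements (D : ℝ → Ω → ℝ) (P : Measure Ω) : Prop :=
  ∀ t h : ℝ, 0 ≤ t → 0 ≤ h → IdentDistrib (fun ω => D (t + h) ω - D t ω) (D h) P P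

lemma iIndepFun_of_forall_fin {β : Type*} [MeasurableSpace β] {Y : ℕ → Ω → β}
    (h : ∀ n, iIndepFun (fun i : Fin (n + 1) => Y i) P) : iIndepFun Y P := by
  refine iIndepFun_iff_finset.2 fun s => ?_
  have hlt : ∀ i ∈ s, i < s.sup id + 1 := fun i hi =>
    Nat.lt_succ_of_le (Finset.le_sup (f := id) hi)
  exact (h (s.sup id)).precomp (g := fun i : s => ⟨i, hlt i i.2⟩)
    fun i j hij => Subtype.ext (congrArg Fin.val hij)

lemma iIndepFun_of_measure_iInter_Ioi {ι : Type*} {Y : ι → Ω → ℝ}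
    (hY : ∀ i, Measurable (Y i))
    (h : ∀ (s : Finset ι) (a : ι → ℝ),
      P (⋂ i ∈ s, Y i ⁻¹' Ioi (a i)) = ∏ i ∈ s, P (Y i ⁻¹' Ioi (a i))) :
    iIndepFun Y P := by
  rw [iIndepFun_iff_iIndep]
  refine iIndepSets.iIndep (fun i => (hY i).comap_le) (fun i => preimage (Y i) '' range Ioi)
    (fun i => isPiSystem_Ioi.comap _) (fun i => ?_) ?_
  · rw [← MeasurableSpace.comap_generateFrom, ← borel_eq_generateFrom_Ioi,
      ← BorelSpace.measurable_eq]
  · rw [iIndepSets_iff]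
    intro s f hf
    have : ∀ i ∈ s, ∃ a, Y i ⁻¹' Ioi a = f i := fun i hi => by
      obtain ⟨_, ⟨a, rfl⟩, hfi⟩ := hf i hi
      exact ⟨a, hfi⟩
    choose! a ha using this
    rw [← iInter₂_congr ha, h s a]
    exact Finset.prod_congr rfl fun i hi => by rw [ha i hi]

lemma ProbabilityTheory.IndepFun.measure_preimage_eq_lintegral [IsFiniteMeasure P]
    {α β : Type*} [MeasurableSpace α] [MeasurableSpace β] {X : Ω → α} {Y : Ω → β}
    (h : IndepFun X Y P) (hX : Measurable X) (hY : Measurable Y) {B : Set (α × β)}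
    (hB : MeasurableSet B) :
    P ((fun ω => (X ω, Y ω)) ⁻¹' B) = ∫⁻ ω, P {ω' | (X ω, Y ω') ∈ B} ∂P := by
  rw [← Measure.map_apply (hX.prodMk hY) hB,
    (indepFun_iff_map_prod_eq_prod_map_map hX.aemeasurable hY.aemeasurable).1 h,
    Measure.prod_apply hB, lintegral_map (measurable_measure_prodMk_left hB) hX]
  refine lintegral_congr fun ω => ?_
  rw [Measure.map_apply hY (measurable_prodMk_left hB)]
  rfl

lemma ae_continuousWithinAt_Iio [IsFiniteMeasure P] (hD : ∀ u, Measurable (D u))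
    (hmono : ∀ᵐ ω ∂P, MonotoneOn (D · ω) (Ici 0))
    (hright0 : ∀ᵐ ω ∂P, Tendsto (D · ω) (𝓝[≥] 0) (𝓝 0))
    (hstat : HasStationaryIncrements D P)
    {v : ℝ} (hv : 0 < v) : ∀ᵐ ω ∂P, ContinuousWithinAt (D · ω) (Iio v) v := by
  set δ : ℕ → ℝ := fun m => v / (m + 1)
  have hδ : ∀ m, δ m ∈ Ioc 0 v := fun m =>
    ⟨by positivity, div_le_self hv.le (le_add_of_nonneg_left m.cast_nonneg)⟩
  have hδ0 : Tendsto δ atTop (𝓝[≥] 0) :=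
    tendsto_nhdsWithin_of_tendsto_nhds_of_eventually_within _
      (by simpa [δ, div_eq_mul_inv] using tendsto_one_div_add_atTop_nhds_zero_nat.const_mul v)
      (Eventually.of_forall fun m => (hδ m).1.le)
  have hsmall : TendstoInMeasure P (fun m => D (δ m)) atTop 0 :=
    tendstoInMeasure_of_tendsto_ae (fun m => (hD _).aestronglyMeasurable) <| by
      filter_upwards [hright0] with ω hω using hω.comp hδ0
  -- by stationarity, `D v - D (v - δ m)` has the law of `D (δ m)`
  have hleft : TendstoInMeasure P (fun m => D (v - δ m)) atTop (D v) := by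
    rw [tendstoInMeasure_iff_norm] at hsmall ⊢
    intro ε hε
    refine (hsmall ε hε).congr fun m => ?_
    have h := ((hstat (v - δ m) (δ m) (sub_nonneg.2 (hδ m).2) (hδ m).1.le).comp
      measurable_norm).measure_mem_eq (measurableSet_Ici (a := ε))
    simpa [preimage, abs_sub_comm] using h.symm
  obtain ⟨ns, -, hns⟩ := hleft.exists_seq_tendsto_ae
  filter_upwards [hmono, hns] with ω hω hωns
  exact hω.continuousWithinAt_Iio_of_tendsto_comp hv
    (fun k => ⟨sub_nonneg.2 (hδ (ns k)).2, sub_lt_self v (hδ (ns k)).1⟩) hωns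

lemma measure_increments_gt (hstat : HasStationaryIncrements D P)
    {t : ℕ → ℝ} (ht0 : 0 ≤ t 0) (ht : Monotone t) (a : ℝ) (k : ℕ) :
    P {ω | a < increments (fun j => D (t j) ω) k} = P {ω | a < D (increments t k) ω} := by
  cases k with
  | zero => simp [increments]
  | succ k =>
    have h := (hstat (t k) (t (k + 1) - t k) (ht0.trans (ht k.zero_le))
      (sub_nonneg.2 (ht k.le_succ))).measure_mem_eq (measurableSet_Ioi (a := a))
    simpa [increments, preimage] using h

lemma measure_iInter_increments_gt
    (hincr : HasIndepIncrementsFromZero D P)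
    (hstat : HasStationaryIncrements D P)
    {t : ℕ → ℝ} (ht0 : 0 ≤ t 0) (ht : StrictMono t) (s : Finset ℕ) (a : ℕ → ℝ) :
    P (⋂ k ∈ s, {ω | a k < increments (fun j => D (t j) ω) k}) =
      ∏ k ∈ s, P {ω | a k < D (increments t k) ω} := by
  have hindep := iIndepFun_of_forall_fin
    (Y := fun k ω => increments (fun j => D (t j) ω) k) fun n => hincr n t ht0 ht
  exact (hindep.measure_inter_preimage_eq_mul s (sets := fun k => Ioi (a k))
    fun _ _ => measurableSet_Ioi).trans
    (Finset.prod_congr rfl fun k _ => measure_increments_gt hstat ht0 ht.monotone (a k) k)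

/-- `f (Vₖ-) - f (Vₖ₋₁-)` for the partial sums `Vₖ` of `w`: the interarrival time `Xₖ` as
a function of the pair `(W, D)`. -/
noncomputable def leftLimIncrement (w : ℕ → ℝ) (f : ℝ → ℝ) (k : ℕ) : ℝ :=
  increments (fun j => ratLeftLim f (partialSum w j)) k

lemma Measurable.leftLimIncrement {α : Type*} [MeasurableSpace α] {w : α → ℕ → ℝ}
    {f : α → ℝ → ℝ} (hw : Measurable w) (hf : Measurable f) (k : ℕ) :
    Measurable fun a => leftLimIncrement (w a) (f a) k := by
  have h : ∀ j, Measurable fun a => ratLeftLim (f a) (partialSum (w a) j) :=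
    fun j => measurable_ratLeftLim hf ((measurable_partialSum j).comp hw)
  cases k with
  | zero => exact (h 0).sub_const 0
  | succ k => exact (h (k + 1)).sub (h k)

lemma measure_iInter_leftLimIncrement_gt_of_pos [IsFiniteMeasure P] (hD : ∀ u, Measurable (D u))
    (hmono : ∀ᵐ ω ∂P, MonotoneOn (D · ω) (Ici 0))
    (hright0 : ∀ᵐ ω ∂P, Tendsto (D · ω) (𝓝[≥] 0) (𝓝 0))
    (hincr : HasIndepIncrementsFromZero D P)
    (hstat : HasStationaryIncrements D P)
    {w : ℕ → ℝ} (hw : ∀ i, 0 < w i) (s : Finset ℕ) (a : ℕ → ℝ) :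
    P (⋂ k ∈ s, {ω | a k < leftLimIncrement w (D · ω) k}) =
      ∏ k ∈ s, P {ω | a k < D (w k) ω} := by
  have hnoJump : ∀ᵐ ω ∂P, ∀ j,
      ratLeftLim (D · ω) (partialSum w j) = D (partialSum w j) ω := by
    refine ae_all_iff.2 fun j => ?_
    filter_upwards [hmono, ae_continuousWithinAt_Iio hD hmono hright0 hstat (partialSum_pos hw j)]
      with ω hω hcont using ratLeftLim_eq_of_tendsto hω (partialSum_pos hw j) hcont
  calc P (⋂ k ∈ s, {ω | a k < leftLimIncrement w (D · ω) k})
      = P (⋂ k ∈ s, {ω | a k < increments (fun j => D (partialSum w j) ω) k}) := by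
        refine measure_congr (eventuallyEq_set.2 ?_)
        filter_upwards [hnoJump] with ω hω
        simp [leftLimIncrement, hω]
    _ = ∏ k ∈ s, P {ω | a k < D (w k) ω} := by
        rw [measure_iInter_increments_gt hincr hstat (partialSum_pos hw 0).le
          (partialSum_strictMono hw)]
        simp only [increments_partialSum]

lemma measurable_path (hD : Measurable (Function.uncurry D)) : Measurable fun ω u => D u ω :=
  measurable_pi_lambda _ fun _ => hD.comp measurable_prodMk_left

lemma measurable_measure_lt_apply [SFinite P] (hD : Measurable (Function.uncurry D)) (a : ℝ) :
    Measurable fun u => P {ω | a < D u ω} :=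
  measurable_measure_prodMk_left (measurableSet_lt measurable_const hD)

lemma measure_iInter_leftLimIncrement_gt [IsFiniteMeasure P]
    (hD : Measurable (Function.uncurry D))
    (hmono : ∀ᵐ ω ∂P, MonotoneOn (D · ω) (Ici 0))
    (hright0 : ∀ᵐ ω ∂P, Tendsto (D · ω) (𝓝[≥] 0) (𝓝 0))
    (hincr : HasIndepIncrementsFromZero D P)
    (hstat : HasStationaryIncrements D P)
    {W : ℕ → Ω → ℝ} (hW : ∀ n, Measurable (W n))
    (hWpos : ∀ᵐ ω ∂P, ∀ i, 0 < W i ω)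
    (hWindep : iIndepFun W P) (hWD : IndepFun (fun ω n => W n ω) (fun ω t => D t ω) P)
    (s : Finset ℕ) (a : ℕ → ℝ) :
    P (⋂ k ∈ s, {ω | a k < leftLimIncrement (W · ω) (D · ω) k}) =
      ∏ k ∈ s, ∫⁻ ω, P {ω' | a k < D (W k ω) ω'} ∂P := by
  set B : Set ((ℕ → ℝ) × (ℝ → ℝ)) :=
    {p | ∀ k ∈ s, a k < leftLimIncrement p.1 p.2 k}
  have hB : MeasurableSet B := by
    simp only [B, ofPred_forall]
    exact .biInter s.countable_toSet fun k _ =>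
      measurableSet_lt measurable_const (measurable_fst.leftLimIncrement measurable_snd k)
  have hpre : (⋂ k ∈ s, {ω | a k < leftLimIncrement (W · ω) (D · ω) k}) =
      (fun ω => ((W · ω), (D · ω))) ⁻¹' B := by
    ext; simp [B]
  rw [hpre, hWD.measure_preimage_eq_lintegral (measurable_pi_lambda _ hW) (measurable_path hD) hB]
  calc ∫⁻ ω, P {ω' | ((W · ω), (D · ω')) ∈ B} ∂P
      = ∫⁻ ω, ∏ k ∈ s, P {ω' | a k < D (W k ω) ω'} ∂P := by
        refine lintegral_congr_ae ?_
        filter_upwards [hWpos] with ω hω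
        rw [← measure_iInter_leftLimIncrement_gt_of_pos (measurable_pi_iff.1 (measurable_path hD))
          hmono hright0 hincr hstat hω]
        congr 1; ext; simp [B]
    _ = ∏ k ∈ s, ∫⁻ ω, P {ω' | a k < D (W k ω) ω'} ∂P :=
        lintegral_prod_eq_prod_lintegral_of_indepFun s _
          (hWindep.comp _ fun k => measurable_measure_lt_apply hD (a k))
          fun k => (measurable_measure_lt_apply hD (a k)).comp (hW k)

lemma ae_pos_of_exp_tail [IsProbabilityMeasure P] {Z : Ω → ℝ} {lam : ℝ} (hZ : Measurable Z)
    (hZexp : ∀ t : ℝ, 0 ≤ t → P {ω | t < Z ω} = ENNReal.ofReal (exp (-(lam * t)))) :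
    ∀ᵐ ω ∂P, 0 < Z ω :=
  ae_iff.2 <| (prob_compl_eq_zero_iff (measurableSet_lt measurable_const hZ)).2 <| by
    simpa using hZexp 0 le_rfl

lemma measure_eq_eq_zero_of_exp_tail [IsProbabilityMeasure P] {Z : Ω → ℝ} {lam : ℝ}
    (hZ : Measurable Z)
    (hZexp : ∀ t : ℝ, 0 ≤ t → P {ω | t < Z ω} = ENNReal.ofReal (exp (-(lam * t))))
    (e : ℝ) :
    P {ω | Z ω = e} = 0 := by
  rcases le_or_gt e 0 with he | he
  · exact measure_mono_null (fun ω (hω : Z ω = e) => (hω.trans_le he).not_gt)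
      (ae_iff.1 (ae_pos_of_exp_tail hZ hZexp))
  -- the tail `x ↦ P {x < Z}` is continuous at `e`, so `P {e ≤ Z} = P {e < Z}`
  have hle : P {ω | e ≤ Z ω} ≤ P {ω | e < Z ω} := by
    rw [hZexp e he.le]
    have hcont : Continuous fun x => ENNReal.ofReal (exp (-(lam * x))) :=
      ENNReal.continuous_ofReal.comp (by fun_prop)
    refine ge_of_tendsto (hcont.continuousWithinAt (s := Iio e)) ?_
    filter_upwards [Ioo_mem_nhdsLT he] with x hx
    rw [← hZexp x hx.1.le]
    exact measure_mono fun ω (hω : e ≤ Z ω) => hx.2.trans_le hω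
  have hdiff : {ω | Z ω = e} = {ω | e ≤ Z ω} \ {ω | e < Z ω} := by
    ext ω
    exact ⟨fun h => ⟨h.ge, h.le.not_gt⟩, fun h => le_antisymm (not_lt.1 h.2) h.1⟩
  rw [hdiff, measure_sdiff (s₁ := {ω | e ≤ Z ω}) (s₂ := {ω | e < Z ω})
    (fun ω (hω : e < Z ω) => hω.le) (measurableSet_lt measurable_const hZ).nullMeasurableSet
    (measure_ne_top _ _), tsub_eq_zero_of_le hle]

lemma measure_lt_comp_eq_measure_sInf_lt [IsProbabilityMeasure P] {Z : Ω → ℝ} {lam : ℝ}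
    (hZ : Measurable Z)
    (hZexp : ∀ t : ℝ, 0 ≤ t → P {ω | t < Z ω} = ENNReal.ofReal (exp (-(lam * t))))
    {f : ℝ → ℝ} (hf : MonotoneOn f (Ici 0)) {t : ℝ}
    (hS : {r | 0 < r ∧ t < f r}.Nonempty) :
    P {ω | t < f (Z ω)} = P {ω | sInf {r | 0 < r ∧ t < f r} < Z ω} := by
  refine measure_congr (eventuallyEq_set.2 ?_)
  filter_upwards [ae_pos_of_exp_tail hZ hZexp,
    measure_eq_zero_iff_ae_notMem.1
      (measure_eq_eq_zero_of_exp_tail hZ hZexp (sInf {r | 0 < r ∧ t < f r}))]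
    with ω hpos hne
  exact lt_iff_sInf_lt_of_monotoneOn hf hS hpos hne

lemma lintegral_measure_lt_comp_eq_integral_exp [IsProbabilityMeasure P]
    (hD : Measurable (Function.uncurry D)) (hmono : ∀ᵐ ω ∂P, MonotoneOn (D · ω) (Ici 0))
    (hunbdd : ∀ᵐ ω ∂P, Tendsto (D · ω) atTop atTop) {Z : Ω → ℝ} (hZ : Measurable Z)
    {lam : ℝ} (hZexp : ∀ t : ℝ, 0 ≤ t → P {ω | t < Z ω} = ENNReal.ofReal (exp (-(lam * t))))
    (t : ℝ) :
    ∫⁻ ω, P {ω' | t < D (Z ω) ω'} ∂P =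
      ENNReal.ofReal (∫ ω', exp (-(lam * sInf {r | 0 < r ∧ t < D r ω'})) ∂P) := by
  set A : Set (Ω × Ω) := {p | t < D (Z p.1) p.2}
  have hA : MeasurableSet A :=
    measurableSet_lt measurable_const (hD.comp ((hZ.comp measurable_fst).prodMk measurable_snd))
  set g : Ω → ℝ≥0∞ := fun ω' => P {ω | t < D (Z ω) ω'}
  have hg : Measurable g := measurable_measure_prodMk_right hA
  have hgexp : ∀ᵐ ω' ∂P,
      g ω' = ENNReal.ofReal (exp (-(lam * sInf {r | 0 < r ∧ t < D r ω'}))) := by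
    filter_upwards [hmono, hunbdd] with ω' hω hωu
    obtain ⟨r, hrt, hr0⟩ := ((hωu.eventually_gt_atTop t).and (eventually_gt_atTop 0)).exists
    rw [← hZexp _ (Real.sInf_nonneg fun r hr => hr.1.le)]
    exact measure_lt_comp_eq_measure_sInf_lt hZ hZexp hω ⟨r, hr0, hrt⟩
  have hfin : ∫⁻ ω', g ω' ∂P ≠ ∞ :=
    ((lintegral_mono fun _ => prob_le_one).trans_lt (by simp)).ne
  calc ∫⁻ ω, P {ω' | t < D (Z ω) ω'} ∂P = ∫⁻ ω', g ω' ∂P := by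
        exact (Measure.prod_apply hA).symm.trans (Measure.prod_apply_symm hA)
    _ = ENNReal.ofReal (∫ ω', (g ω').toReal ∂P) := by
        rw [integral_toReal hg.aemeasurable (ae_of_all _ fun _ => measure_lt_top _ _),
          ENNReal.ofReal_toReal hfin]
    _ = ENNReal.ofReal (∫ ω', exp (-(lam * sInf {r | 0 < r ∧ t < D r ω'})) ∂P) := by
        refine congrArg _ (integral_congr_ae ?_)
        filter_upwards [hgexp] with ω' h
        rw [h, ENNReal.toReal_ofReal (exp_pos _).le]

lemma ae_eq_leftLimIncrement {W : ℕ → Ω → ℝ} {V τ X : ℕ → Ω → ℝ}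
    (hmono : ∀ᵐ ω ∂P, MonotoneOn (D · ω) (Ici 0))
    (hWpos : ∀ᵐ ω ∂P, ∀ i, 0 < W i ω)
    (hV : ∀ n ω, V n ω = ∑ i ∈ Finset.range (n + 1), W i ω)
    (hτ : ∀ n, ∀ᵐ ω ∂P, Tendsto (D · ω) (𝓝[<] (V n ω)) (𝓝 (τ n ω)))
    (hX0 : ∀ ω, X 0 ω = τ 0 ω) (hXn : ∀ n ω, X (n + 1) ω = τ (n + 1) ω - τ n ω)
    (k : ℕ) :
    X k =ᵐ[P] fun ω => leftLimIncrement (W · ω) (D · ω) k := by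
  filter_upwards [hmono, ae_all_iff.2 hτ, hWpos] with ω hω hτω hWω
  have hτ_eq : ∀ j, τ j ω = ratLeftLim (D · ω) (partialSum (W · ω) j) := fun j =>
    (ratLeftLim_eq_of_tendsto hω (partialSum_pos hWω j)
      (by simpa only [hV, partialSum] using hτω j)).symm
  cases k <;> simp [leftLimIncrement, increments, hX0, hXn, hτ_eq]

end

theorem stmt7_general {Ω : Type*} [MeasurableSpace Ω] (P : MeasureTheory.Measure Ω)
    [MeasureTheory.IsProbabilityMeasure P]
    (lam : ℝ)
    (D : ℝ → Ω → ℝ)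
    (hDmeas : Measurable fun p : ℝ × Ω => D p.1 p.2)
    (hpath : ∀ᵐ ω ∂P, StrictMonoOn (fun t => D t ω) (Set.Ici 0) ∧
      (∀ t : ℝ, 0 ≤ t → ContinuousWithinAt (fun u => D u ω) (Set.Ici t) t) ∧
      D 0 ω = 0 ∧ Filter.Tendsto (fun t => D t ω) Filter.atTop Filter.atTop)
    (hincr : ∀ (n : ℕ) (t : ℕ → ℝ), 0 ≤ t 0 → StrictMono t →
      ProbabilityTheory.iIndepFun
        (fun (i : Fin (n + 1)) ω =>
          D (t (i : ℕ)) ω - if (i : ℕ) = 0 then 0 else D (t ((i : ℕ) - 1)) ω) P)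
    (hstat : ∀ t h : ℝ, 0 ≤ t → 0 ≤ h →
      ProbabilityTheory.IdentDistrib (fun ω => D (t + h) ω - D t ω) (fun ω => D h ω) P P)
    (W : ℕ → Ω → ℝ)
    (hWmeas : ∀ n, Measurable (W n))
    (hWexp : ∀ n, ∀ t : ℝ, 0 ≤ t → P {ω | t < W n ω} = ENNReal.ofReal (Real.exp (-(lam * t))))
    (hWindep : ProbabilityTheory.iIndepFun W P)
    (hWD : ProbabilityTheory.IndepFun (fun ω n => W n ω) (fun ω t => D t ω) P)
    (Einv : ℝ → Ω → ℝ)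
    (hEinv : ∀ t ω, Einv t ω = sInf {r : ℝ | 0 < r ∧ t < D r ω})
    (V : ℕ → Ω → ℝ) (hV : ∀ n ω, V n ω = ∑ i ∈ Finset.range (n + 1), W i ω)
    (τ : ℕ → Ω → ℝ)
    (hτ : ∀ n, ∀ᵐ ω ∂P,
      Filter.Tendsto (fun t => D t ω) (nhdsWithin (V n ω) (Set.Iio (V n ω))) (nhds (τ n ω)))
    (X : ℕ → Ω → ℝ)
    (hX0 : ∀ ω, X 0 ω = τ 0 ω)
    (hXn : ∀ n ω, X (n + 1) ω = τ (n + 1) ω - τ n ω) :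
    ProbabilityTheory.iIndepFun X P ∧
    ∀ n, ∀ t : ℝ, 0 ≤ t →
      P {ω | t < X n ω} = ENNReal.ofReal (∫ ω, Real.exp (-(lam * Einv t ω)) ∂P) := by
  have hmono : ∀ᵐ ω ∂P, MonotoneOn (D · ω) (Ici 0) := hpath.mono fun ω h => h.1.monotoneOn
  have hright0 : ∀ᵐ ω ∂P, Tendsto (D · ω) (𝓝[≥] 0) (𝓝 0) :=
    hpath.mono fun ω ⟨_, hrc, h0, _⟩ => by
      simpa only [ContinuousWithinAt, h0] using hrc 0 le_rfl
  have hWpos : ∀ᵐ ω ∂P, ∀ i, 0 < W i ω :=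
    ae_all_iff.2 fun i => ae_pos_of_exp_tail (hWmeas i) (hWexp i)
  set Y : ℕ → Ω → ℝ := fun k ω => leftLimIncrement (W · ω) (D · ω) k
  have hXY : ∀ k, X k =ᵐ[P] Y k := ae_eq_leftLimIncrement hmono hWpos hV hτ hX0 hXn
  have hY := measure_iInter_leftLimIncrement_gt hDmeas hmono hright0 hincr hstat hWmeas hWpos
    hWindep hWD
  have hY1 : ∀ k a, P {ω | a < Y k ω} = ∫⁻ ω, P {ω' | a < D (W k ω) ω'} ∂P :=
    fun k a => by simpa using hY {k} fun _ => a
  have hYmeas : ∀ k, Measurable (Y k) :=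
    (measurable_pi_lambda _ hWmeas).leftLimIncrement (measurable_path hDmeas)
  have hYindep : iIndepFun Y P := iIndepFun_of_measure_iInter_Ioi hYmeas fun s a =>
    (hY s a).trans (Finset.prod_congr rfl fun k _ => (hY1 k (a k)).symm)
  refine ⟨hYindep.congr fun k => (hXY k).symm, fun n t _ => ?_⟩
  have hXYn : P {ω | t < X n ω} = P {ω | t < Y n ω} :=
    measure_congr (eventuallyEq_set.2 ((hXY n).mono fun ω h => by simp [h]))
  rw [hXYn, hY1, lintegral_measure_lt_comp_eq_integral_exp hDmeas hmono
    (hpath.mono fun ω h => h.2.2.2) (hWmeas n) (hWexp n) t]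
  simp only [hEinv]

/-- Theorem 4.1: Let `D` be a strictly increasing subordinator (a.s. strictly
increasing, right-continuous paths with `D 0 = 0`, `D t → ∞`, independent and stationary
increments), and let `(Wₙ)` be i.i.d. exponential(λ), independent of the whole process `D`.
Let `E(t) = inf {r > 0 : D r > t}` be the inverse process, `Vₙ = W₀ + ⋯ + Wₙ`,
`τₙ = D(Vₙ−)` the left limit of the path at `Vₙ`, `X₀ = τ₀`, `Xₙ₊₁ = τₙ₊₁ − τₙ`. Then the
`(Xₙ)` are i.i.d. with `P(Xₙ > t) = E[e^{−λ E(t)}]` for every `t ≥ 0`. -/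
theorem stmt7 {Ω : Type*} [MeasurableSpace Ω] (P : MeasureTheory.Measure Ω)
    [MeasureTheory.IsProbabilityMeasure P]
    (lam : ℝ) (hlam : 0 < lam)
    (D : ℝ → Ω → ℝ)
    (hDmeas : Measurable fun p : ℝ × Ω => D p.1 p.2)
    (hpath : ∀ᵐ ω ∂P, StrictMonoOn (fun t => D t ω) (Set.Ici 0) ∧
      (∀ t : ℝ, 0 ≤ t → ContinuousWithinAt (fun u => D u ω) (Set.Ici t) t) ∧
      D 0 ω = 0 ∧ Filter.Tendsto (fun t => D t ω) Filter.atTop Filter.atTop)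
    (hincr : ∀ (n : ℕ) (t : ℕ → ℝ), 0 ≤ t 0 → StrictMono t →
      ProbabilityTheory.iIndepFun
        (fun (i : Fin (n + 1)) ω =>
          D (t (i : ℕ)) ω - if (i : ℕ) = 0 then 0 else D (t ((i : ℕ) - 1)) ω) P)
    (hstat : ∀ t h : ℝ, 0 ≤ t → 0 ≤ h →
      ProbabilityTheory.IdentDistrib (fun ω => D (t + h) ω - D t ω) (fun ω => D h ω) P P)
    (W : ℕ → Ω → ℝ)
    (hWmeas : ∀ n, Measurable (W n))
    (hWexp : ∀ n, ∀ t : ℝ, 0 ≤ t → P {ω | t < W n ω} = ENNReal.ofReal (Real.exp (-(lam * t))))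
    (hWindep : ProbabilityTheory.iIndepFun W P)
    (hWD : ProbabilityTheory.IndepFun (fun ω n => W n ω) (fun ω t => D t ω) P)
    (Einv : ℝ → Ω → ℝ)
    (hEinv : ∀ t ω, Einv t ω = sInf {r : ℝ | 0 < r ∧ t < D r ω})
    (V : ℕ → Ω → ℝ) (hV : ∀ n ω, V n ω = ∑ i ∈ Finset.range (n + 1), W i ω)
    (τ : ℕ → Ω → ℝ)
    (hτ : ∀ n, ∀ᵐ ω ∂P,
      Filter.Tendsto (fun t => D t ω) (nhdsWithin (V n ω) (Set.Iio (V n ω))) (nhds (τ n ω)))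
    (X : ℕ → Ω → ℝ)
    (hX0 : ∀ ω, X 0 ω = τ 0 ω)
    (hXn : ∀ n ω, X (n + 1) ω = τ (n + 1) ω - τ n ω) :
    ProbabilityTheory.iIndepFun X P ∧
    ∀ n, ∀ t : ℝ, 0 ≤ t →
      P {ω | t < X n ω} = ENNReal.ofReal (∫ ω, Real.exp (-(lam * Einv t ω)) ∂P) :=
  stmt7_general P lam D hDmeas hpath hincr hstat W hWmeas hWexp hWindep hWD Einv hEinv V hV τ hτ X
    hX0 hXn
end

section
/- Let λ > 0, t > 0 and k ∈ ℕ. Then the binomial probability C(⌊λt/p⌋, k) · p^k · (1 − p)^{⌊λt/p⌋ − k} converges to the Poisson probability e^{−λt} (λt)^k / k! as p → 0⁺. -/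
open Filter Topology Real Asymptotics

/-!
With `n = ⌊λt/p⌋`, we have `n → ∞` and `n p → λt` as `p → 0⁺`, so the claim is an instance
of the Poisson limit theorem along an arbitrary filter: if `n → ∞` and `n p → r`, then
`C(n, k) p^k → r^k / k!` because `C(n, k) ~ n^k / k!`, and `(1 - p)^(n - k) → e^{-r}` because
`-n p / (1 - p) ≤ n log (1 - p) ≤ -n p`.
-/

section PoissonLimit

variable {α : Type*} {l : Filter α} {n : α → ℕ} {p : α → ℝ} {r : ℝ}

lemma tendsto_zero_of_tendsto_natCast_mul (hn : Tendsto n l atTop)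
    (hr : Tendsto (fun a => n a * p a) l (𝓝 r)) : Tendsto p l (𝓝 0) := by
  refine (hr.div_atTop (tendsto_natCast_atTop_atTop.comp hn)).congr' ?_
  filter_upwards [hn.eventually_ge_atTop 1] with a ha
  exact mul_div_cancel_left₀ _ (by positivity : (n a : ℝ) ≠ 0)

lemma tendsto_one_sub_pow_of_tendsto_natCast_mul (hn : Tendsto n l atTop)
    (hr : Tendsto (fun a => n a * p a) l (𝓝 r)) :
    Tendsto (fun a => (1 - p a) ^ n a) l (𝓝 (exp (-r))) := by
  have hp := tendsto_zero_of_tendsto_natCast_mul hn hr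
  have hp_lt_one : ∀ᶠ a in l, p a < 1 := hp.eventually (gt_mem_nhds one_pos)
  have hlog : Tendsto (fun a => n a * log (1 - p a)) l (𝓝 (-r)) := by
    have hlower : Tendsto (fun a => -(n a * p a) / (1 - p a)) l (𝓝 (-r)) := by
      have h1 : Tendsto (fun a => 1 - p a) l (𝓝 1) := by simpa using tendsto_const_nhds.sub hp
      simpa only [div_one, Pi.div_def] using hr.neg.div h1 one_ne_zero
    refine tendsto_of_tendsto_of_tendsto_of_le_of_le' hlower hr.neg ?_ ?_
    · filter_upwards [hp_lt_one] with a ha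
      have hpos : 0 < 1 - p a := by linarith
      have := one_sub_inv_le_log_of_pos hpos
      calc -(n a * p a) / (1 - p a) = n a * (1 - (1 - p a)⁻¹) := by field_simp; ring
        _ ≤ n a * log (1 - p a) := by gcongr
    · filter_upwards [hp_lt_one] with a ha
      have := log_le_sub_one_of_pos (show 0 < 1 - p a by linarith)
      calc n a * log (1 - p a) ≤ n a * (1 - p a - 1) := by gcongr
        _ = -(n a * p a) := by ring
  refine ((continuous_exp.tendsto _).comp hlog).congr' ?_
  filter_upwards [hp_lt_one] with a ha
  simp only [Function.comp_apply]
  rw [exp_nat_mul, exp_log (by linarith)]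

lemma tendsto_choose_mul_pow_of_tendsto_natCast_mul (k : ℕ) (hn : Tendsto n l atTop)
    (hr : Tendsto (fun a => n a * p a) l (𝓝 r)) :
    Tendsto (fun a => (n a).choose k * p a ^ k) l (𝓝 (r ^ k / k.factorial)) := by
  have hequiv : (fun a => ((n a).choose k : ℝ) * p a ^ k) ~[l]
      fun a => (n a * p a) ^ k / k.factorial :=
    calc (fun a => ((n a).choose k : ℝ) * p a ^ k)
        ~[l] fun a => ((n a : ℝ) ^ k / k.factorial) * p a ^ k :=
          ((isEquivalent_choose k).comp_tendsto hn).mul .refl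
      _ = fun a => (n a * p a) ^ k / k.factorial := by ext; ring
  exact hequiv.tendsto_nhds_iff.mpr ((hr.pow k).div_const _)

theorem tendsto_choose_mul_pow_mul_one_sub_pow_of_tendsto_natCast_mul (k : ℕ)
    (hn : Tendsto n l atTop) (hr : Tendsto (fun a => n a * p a) l (𝓝 r)) :
    Tendsto (fun a => (n a).choose k * p a ^ k * (1 - p a) ^ (n a - k)) l
      (𝓝 (exp (-r) * r ^ k / k.factorial)) := by
  have hp := tendsto_zero_of_tendsto_natCast_mul hn hr
  have hsub : Tendsto (fun a => (1 - p a) ^ n a / (1 - p a) ^ k) l (𝓝 (exp (-r))) := by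
    have h1 : Tendsto (fun a => 1 - p a) l (𝓝 1) := by simpa using tendsto_const_nhds.sub hp
    simpa only [one_pow, div_one, Pi.div_def] using
      (tendsto_one_sub_pow_of_tendsto_natCast_mul hn hr).div (h1.pow k) (by simp)
  rw [mul_div_assoc, mul_comm]
  refine (tendsto_choose_mul_pow_of_tendsto_natCast_mul k hn hr).mul (hsub.congr' ?_)
  filter_upwards [hn.eventually_ge_atTop k, hp.eventually (gt_mem_nhds one_pos)] with a hk hp1
  exact (pow_sub₀ _ (by linarith) hk).symm

end PoissonLimit

lemma tendsto_natFloor_div_nhdsGT_zero {c : ℝ} (hc : 0 < c) :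
    Tendsto (fun p : ℝ => ⌊c / p⌋₊) (𝓝[>] 0) atTop :=
  tendsto_nat_floor_atTop.comp <|
    (tendsto_inv_nhdsGT_zero.const_mul_atTop hc).congr fun p => (div_eq_mul_inv c p).symm

lemma tendsto_natFloor_div_mul_self_nhdsGT_zero {c : ℝ} (hc : 0 ≤ c) :
    Tendsto (fun p : ℝ => (⌊c / p⌋₊ : ℝ) * p) (𝓝[>] 0) (𝓝 c) := by
  have hid : Tendsto (fun p : ℝ => p) (𝓝[>] 0) (𝓝 0) :=
    tendsto_nhdsWithin_of_tendsto_nhds tendsto_id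
  refine tendsto_of_tendsto_of_tendsto_of_le_of_le' (g := fun p => c - p) (h := fun _ => c)
    (by simpa using tendsto_const_nhds.sub hid) tendsto_const_nhds ?_ ?_
  · filter_upwards [self_mem_nhdsWithin] with p (hp : 0 < p)
    have := (div_lt_iff₀ hp).1 (Nat.lt_floor_add_one (c / p))
    linarith
  · filter_upwards [self_mem_nhdsWithin] with p (hp : 0 < p)
    exact (le_div_iff₀ hp).1 (Nat.floor_le (by positivity))

/-- For `λ > 0`, `t > 0` and `k ∈ ℕ`, the binomial probability
`C(⌊λt/p⌋, k) p^k (1−p)^{⌊λt/p⌋−k}` converges to the Poisson probability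
`e^{−λt} (λt)^k / k!` as `p → 0⁺`. -/
theorem stmt9 (lam t : ℝ) (k : ℕ) (hlam : 0 < lam) (ht : 0 < t) :
    Filter.Tendsto
      (fun p : ℝ =>
        (Nat.choose ⌊lam * t / p⌋₊ k : ℝ) * p ^ k * (1 - p) ^ (⌊lam * t / p⌋₊ - k))
      (nhdsWithin 0 (Set.Ioi 0))
      (nhds (Real.exp (-(lam * t)) * (lam * t) ^ k / (Nat.factorial k : ℝ))) := by
  have hc : 0 < lam * t := mul_pos hlam ht
  exact tendsto_choose_mul_pow_mul_one_sub_pow_of_tendsto_natCast_mul k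
    (tendsto_natFloor_div_nhdsGT_zero hc) (tendsto_natFloor_div_mul_self_nhdsGT_zero hc.le)
end

section
/- Let 0 < β < 1, λ > 0 and n ∈ ℕ. Suppose h : (0,∞) × (0,∞) → ℝ is nonnegative and measurable, for each fixed x > 0 and s > 0 the function t ↦ e^{−st} h(x,t) is integrable, and ∫₀^∞ e^{−st} h(x,t) dt = s^{β−1} e^{−x s^β} for all x > 0 and s > 0. Then for every s > 0, ∫₀^∞ e^{−st} ( ∫₀^∞ e^{−λx} ((λx)^n/n!) h(x,t) dx ) dt = s^{β−1} λ^n / (λ + s^β)^{n+1}. -/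
open Set Filter Topology MeasureTheory Real

/-!
Laplace-transforming in `t` first and integrating in `x` afterwards (Tonelli–Fubini, legitimate
since everything is nonnegative) turns the left-hand side into
`s^{β-1} ∫₀^∞ e^{-λx} (λx)^n/n! · e^{-x s^β} dx`, a Gamma integral at rate `λ + s^β`.
-/

open scoped Nat

theorem integral_integral_swap_of_nonneg {α β : Type*} [MeasurableSpace α] [MeasurableSpace β]
    {μ : Measure α} {ν : Measure β} [SFinite μ] [SFinite ν] {f : α → β → ℝ}
    (hf : AEStronglyMeasurable (Function.uncurry f) (μ.prod ν))
    (hf_nonneg : ∀ᵐ y ∂ν, ∀ᵐ x ∂μ, 0 ≤ f x y)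
    (hf_int : ∀ᵐ y ∂ν, Integrable (fun x => f x y) μ)
    (hF : Integrable (fun y => ∫ x, f x y ∂μ) ν) :
    ∫ x, ∫ y, f x y ∂ν ∂μ = ∫ y, ∫ x, f x y ∂μ ∂ν := by
  refine integral_integral_swap ((integrable_prod_iff' hf).2 ⟨hf_int, hF.congr ?_⟩)
  filter_upwards [hf_nonneg] with y hy
  exact integral_congr_ae (by filter_upwards [hy] with x hx using (norm_of_nonneg hx).symm)

theorem integral_pow_mul_exp_neg_mul_Ioi (n : ℕ) {r : ℝ} (hr : 0 < r) :
    ∫ x in Ioi (0 : ℝ), x ^ n * exp (-(r * x)) = n ! / r ^ (n + 1) := by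
  have key := integral_rpow_mul_exp_neg_mul_Ioi (a := n + 1) (by positivity) hr
  simp only [add_sub_cancel_right, rpow_natCast, Gamma_nat_eq_factorial] at key
  rw [key, ← Nat.cast_add_one, rpow_natCast, one_div, inv_pow]
  ring

theorem integrableOn_pow_mul_exp_neg_mul_Ioi (n : ℕ) {r : ℝ} (hr : 0 < r) :
    IntegrableOn (fun x => x ^ n * exp (-(r * x))) (Ioi 0) :=
  .of_integral_ne_zero (by rw [integral_pow_mul_exp_neg_mul_Ioi n hr]; positivity)

theorem exp_neg_mul_mul_pow_div_factorial_mul_exp_neg (lam a x : ℝ) (n : ℕ) :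
    exp (-(lam * x)) * ((lam * x) ^ n / n !) * exp (-(x * a)) =
      lam ^ n / n ! * (x ^ n * exp (-((lam + a) * x))) := by
  rw [mul_pow, show -((lam + a) * x) = -(lam * x) + -(x * a) by ring, exp_add]
  ring

theorem integrableOn_exp_neg_mul_mul_pow_div_factorial_mul_exp_neg {lam a : ℝ} (n : ℕ)
    (h : 0 < lam + a) :
    IntegrableOn (fun x => exp (-(lam * x)) * ((lam * x) ^ n / n !) * exp (-(x * a)))
      (Ioi 0) := by
  simp_rw [exp_neg_mul_mul_pow_div_factorial_mul_exp_neg]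
  exact (integrableOn_pow_mul_exp_neg_mul_Ioi n h).const_mul _

theorem integral_exp_neg_mul_mul_pow_div_factorial_mul_exp_neg {lam a : ℝ} (n : ℕ)
    (h : 0 < lam + a) :
    ∫ x in Ioi (0 : ℝ), exp (-(lam * x)) * ((lam * x) ^ n / n !) * exp (-(x * a)) =
      lam ^ n / (lam + a) ^ (n + 1) := by
  simp_rw [exp_neg_mul_mul_pow_div_factorial_mul_exp_neg]
  rw [integral_const_mul, integral_pow_mul_exp_neg_mul_Ioi n h]
  field_simp

theorem integral_exp_neg_mul_integral_eq_integral_mul_laplace {s : ℝ} {w L : ℝ → ℝ}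
    {h : ℝ → ℝ → ℝ} (hmeas : Measurable fun p : ℝ × ℝ => h p.1 p.2) (hw : Measurable w)
    (hw_nonneg : ∀ x, 0 < x → 0 ≤ w x) (hnn : ∀ x t : ℝ, 0 < x → 0 < t → 0 ≤ h x t)
    (hint : ∀ x, 0 < x → IntegrableOn (fun t => exp (-(s * t)) * h x t) (Ioi 0))
    (hlap : ∀ x, 0 < x → ∫ t in Ioi (0 : ℝ), exp (-(s * t)) * h x t = L x)
    (hwL : IntegrableOn (fun x => w x * L x) (Ioi 0)) :
    ∫ t in Ioi (0 : ℝ), exp (-(s * t)) * ∫ x in Ioi (0 : ℝ), w x * h x t =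
      ∫ x in Ioi (0 : ℝ), w x * L x := by
  have hsection : ∀ x, 0 < x →
      ∫ t in Ioi (0 : ℝ), exp (-(s * t)) * (w x * h x t) = w x * L x := fun x hx => by
    simp_rw [mul_left_comm _ (w x)]
    rw [integral_const_mul, hlap x hx]
  simp_rw [← integral_const_mul]
  rw [integral_integral_swap_of_nonneg]
  · exact setIntegral_congr_fun measurableSet_Ioi hsection
  · have hswap : Measurable fun p : ℝ × ℝ => h p.2 p.1 := hmeas.comp measurable_swap
    exact Measurable.aestronglyMeasurable (by fun_prop)
  · filter_upwards [ae_restrict_mem measurableSet_Ioi] with x hx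
    filter_upwards [ae_restrict_mem measurableSet_Ioi] with t ht
    exact mul_nonneg (exp_nonneg _) (mul_nonneg (hw_nonneg x hx) (hnn x t hx ht))
  · filter_upwards [ae_restrict_mem measurableSet_Ioi] with x hx
    simp_rw [mul_left_comm _ (w x)]
    exact (hint x hx).const_mul _
  · exact hwL.congr_fun (fun x hx => (hsection x hx).symm) measurableSet_Ioi

theorem stmt13_general (β lam : ℝ) (n : ℕ) (hlam : 0 < lam)
    (h : ℝ → ℝ → ℝ)
    (hmeas : Measurable fun p : ℝ × ℝ => h p.1 p.2)
    (hnn : ∀ x t : ℝ, 0 < x → 0 < t → 0 ≤ h x t)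
    (hint : ∀ x : ℝ, 0 < x → ∀ s : ℝ, 0 < s →
      MeasureTheory.IntegrableOn (fun t => Real.exp (-(s * t)) * h x t) (Set.Ioi 0))
    (hlap : ∀ x : ℝ, 0 < x → ∀ s : ℝ, 0 < s →
      ∫ t in Set.Ioi (0:ℝ), Real.exp (-(s * t)) * h x t =
        s ^ (β - 1) * Real.exp (-(x * s ^ β))) :
    ∀ s : ℝ, 0 < s →
      ∫ t in Set.Ioi (0:ℝ), Real.exp (-(s * t)) *
          (∫ x in Set.Ioi (0:ℝ),
            Real.exp (-(lam * x)) * ((lam * x) ^ n / (Nat.factorial n : ℝ)) * h x t) =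
        s ^ (β - 1) * lam ^ n / (lam + s ^ β) ^ (n + 1) := by
  intro s hs
  have hrate : 0 < lam + s ^ β := by positivity
  have hweight := integrableOn_exp_neg_mul_mul_pow_div_factorial_mul_exp_neg n hrate
  calc _ = ∫ x in Ioi (0 : ℝ), exp (-(lam * x)) * ((lam * x) ^ n / n !) *
        (s ^ (β - 1) * exp (-(x * s ^ β))) :=
        integral_exp_neg_mul_integral_eq_integral_mul_laplace hmeas (by fun_prop)
          (fun x hx => by positivity) hnn (fun x hx => hint x hx s hs) (fun x hx => hlap x hx s hs)
          (by simp only [mul_left_comm _ (s ^ (β - 1))]; exact hweight.const_mul _)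
    _ = s ^ (β - 1) * ∫ x in Ioi (0 : ℝ), exp (-(lam * x)) * ((lam * x) ^ n / n !) *
        exp (-(x * s ^ β)) := by
      rw [← integral_const_mul]
      simp only [mul_left_comm _ (s ^ (β - 1))]
    _ = s ^ (β - 1) * lam ^ n / (lam + s ^ β) ^ (n + 1) := by
      rw [integral_exp_neg_mul_mul_pow_div_factorial_mul_exp_neg n hrate, mul_div_assoc]

/-- if `h(x,t)` is nonnegative and measurable with Laplace transform in `t`
equal to `s^{β−1} e^{−x s^β}` for every `x > 0`, then the double Laplace transform of the
time-changed Poisson probability `∫₀^∞ e^{−λx} ((λx)^n/n!) h(x,t) dx` equals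
`s^{β−1} λ^n / (λ + s^β)^{n+1}`. -/
theorem stmt13 (β lam : ℝ) (n : ℕ) (hβ0 : 0 < β) (hβ1 : β < 1) (hlam : 0 < lam)
    (h : ℝ → ℝ → ℝ)
    (hmeas : Measurable fun p : ℝ × ℝ => h p.1 p.2)
    (hnn : ∀ x t : ℝ, 0 < x → 0 < t → 0 ≤ h x t)
    (hint : ∀ x : ℝ, 0 < x → ∀ s : ℝ, 0 < s →
      MeasureTheory.IntegrableOn (fun t => Real.exp (-(s * t)) * h x t) (Set.Ioi 0))
    (hlap : ∀ x : ℝ, 0 < x → ∀ s : ℝ, 0 < s →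
      ∫ t in Set.Ioi (0:ℝ), Real.exp (-(s * t)) * h x t =
        s ^ (β - 1) * Real.exp (-(x * s ^ β))) :
    ∀ s : ℝ, 0 < s →
      ∫ t in Set.Ioi (0:ℝ), Real.exp (-(s * t)) *
          (∫ x in Set.Ioi (0:ℝ),
            Real.exp (-(lam * x)) * ((lam * x) ^ n / (Nat.factorial n : ℝ)) * h x t) =
        s ^ (β - 1) * lam ^ n / (lam + s ^ β) ^ (n + 1) :=
  stmt13_general β lam n hlam h hmeas hnn hint hlap
end
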